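/- arXiv:math/0505689 — 2 statements merged into one kernel-verified Lean document; each statement's English description precedes it below -/
import Mathlib

section
/- Let M be a finite matroid. For any two cyclic flats A and B of M: (a) the closure cl(A ∪ B) is a cyclic flat of M, and it is the least cyclic flat of M containing both A and B; (b) the union of all circuits of M contained in A ∩ B is a cyclic flat of M, and it is the greatest cyclic flat of M contained in both A and B. Consequently, the cyclic flats of M, ordered by inclusion, form a lattice. -/
namespace Matroid

variable {α β : Type*}

/-- A circuit of a matroid: a minimal dependent set. -/
def IsCircuit' (M : Matroid α) (C : Set α) : Prop :=
  M.Dep C ∧ ∀ D, D ⊂ C → M.Indep D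

/-- A cyclic flat: a flat that is a (possibly empty) union of circuits. -/
def CyclicFlat (M : Matroid α) (X : Set α) : Prop :=
  M.IsFlat X ∧ ∀ e ∈ X, ∃ C, M.IsCircuit' C ∧ C ⊆ X ∧ e ∈ C

/-- The rank of a set: the maximum size of an independent subset. -/
noncomputable def rk (M : Matroid α) (X : Set α) : ℕ :=
  sSup {n | ∃ I, M.Indep I ∧ I ⊆ X ∧ I.ncard = n}

/-- Deletion of a set from a matroid. -/
def del (M : Matroid α) (D : Set α) : Matroid α := M ↾ (M.E \ D)

/-- Contraction of a set in a matroid. -/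
def con (M : Matroid α) (C : Set α) : Matroid α := (M✶ ↾ (M.E \ C))✶

/-- `N` is a minor of `M` if it is obtained from `M` by a contraction and a deletion. -/
def IsMinorOf (N M : Matroid α) : Prop := ∃ C D, N = (M.con C).del D

/-- Matroid isomorphism: a bijection of ground sets preserving independence. -/
def IsIsoTo (M : Matroid α) (N : Matroid β) : Prop :=
  ∃ e : M.E ≃ N.E, ∀ I : Set M.E,
    M.Indep (Subtype.val '' I) ↔ N.Indep (Subtype.val '' (e '' I))

end Matroid

/-!
A set is a union of circuits exactly when each of its elements `e` lies in the closure of the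
set minus `e`. This property passes to unions and to closures, so `cl (A ∪ B)` is a cyclic
flat. Dually, the union of the circuits inside a flat `F` is again a flat: an element of its
closure lies in `F`, and its fundamental circuit then lies in `F` too. Applied to the flat
`A ∩ B`, this gives the meet.
-/

open Set

namespace Matroid

variable {α : Type*} {M : Matroid α} {A B C F X Y : Set α}

lemma isCircuit'_iff : M.IsCircuit' C ↔ M.IsCircuit C := by
  rw [isCircuit_iff_forall_ssubset, IsCircuit']

lemma IsFlat.inter {F₁ F₂ : Set α} (h₁ : M.IsFlat F₁) (h₂ : M.IsFlat F₂) :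
    M.IsFlat (F₁ ∩ F₂) := by
  rw [inter_eq_iInter]
  exact IsFlat.iInter (by rintro (_ | _) <;> assumption)

def Cyclic (M : Matroid α) (X : Set α) : Prop :=
  ∀ e ∈ X, ∃ C, M.IsCircuit' C ∧ C ⊆ X ∧ e ∈ C

lemma cyclic_iff_forall_mem_closure_sdiff :
    M.Cyclic X ↔ ∀ e ∈ X, e ∈ M.closure (X \ {e}) := by
  refine forall₂_congr fun e he ↦ ?_
  rw [mem_closure_iff_exists_isCircuit (by simp), insert_sdiff_singleton, insert_eq_of_mem he]
  simp only [isCircuit'_iff]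
  tauto

lemma Cyclic.union (hX : M.Cyclic X) (hY : M.Cyclic Y) : M.Cyclic (X ∪ Y) := by
  rintro e (he | he)
  · obtain ⟨C, hC, hCX, heC⟩ := hX e he
    exact ⟨C, hC, hCX.trans subset_union_left, heC⟩
  · obtain ⟨C, hC, hCY, heC⟩ := hY e he
    exact ⟨C, hC, hCY.trans subset_union_right, heC⟩

lemma Cyclic.closure (hX : M.Cyclic X) : M.Cyclic (M.closure X) := by
  rw [cyclic_iff_forall_mem_closure_sdiff] at hX ⊢
  have hXE : X ⊆ M.E := fun x hx ↦ M.closure_subset_ground _ (hX x hx)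
  intro e he
  by_cases heX : e ∈ X
  · exact M.closure_subset_closure (sdiff_subset_sdiff_left (M.subset_closure X)) (hX e heX)
  · exact M.closure_subset_closure (subset_sdiff_singleton (M.subset_closure X) heX) he

lemma cyclic_sUnion_isCircuit'_subset (Y : Set α) :
    M.Cyclic (⋃₀ {C | M.IsCircuit' C ∧ C ⊆ Y}) :=
  fun _ ⟨C, hC, heC⟩ ↦ ⟨C, hC.1, subset_sUnion_of_mem hC, heC⟩

lemma Cyclic.subset_sUnion_isCircuit'_subset (hX : M.Cyclic X) (hXY : X ⊆ Y) :
    X ⊆ ⋃₀ {C | M.IsCircuit' C ∧ C ⊆ Y} := fun e he ↦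
  let ⟨C, hC, hCX, heC⟩ := hX e he
  ⟨C, ⟨hC, hCX.trans hXY⟩, heC⟩

lemma IsFlat.isFlat_sUnion_isCircuit'_subset (hF : M.IsFlat F) :
    M.IsFlat (⋃₀ {C | M.IsCircuit' C ∧ C ⊆ F}) := by
  set D := ⋃₀ {C | M.IsCircuit' C ∧ C ⊆ F}
  have hDF : D ⊆ F := sUnion_subset fun _ hC ↦ hC.2
  refine isFlat_iff_closure_eq.2 <| (M.subset_closure D (hDF.trans hF.subset_ground)).antisymm' ?_
  intro e he
  by_contra heD
  have heF : e ∈ F := hF.closure.subset (M.closure_subset_closure hDF he)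
  obtain ⟨C, hCD, hC, heC⟩ := exists_isCircuit_of_mem_closure he heD
  exact heD ⟨C, ⟨isCircuit'_iff.2 hC, hCD.trans (insert_subset heF hDF)⟩, heC⟩

lemma CyclicFlat.closure_union (hA : M.CyclicFlat A) (hB : M.CyclicFlat B) :
    M.CyclicFlat (M.closure (A ∪ B)) :=
  ⟨M.isFlat_closure _, Cyclic.closure (Cyclic.union hA.2 hB.2)⟩

lemma CyclicFlat.sUnion_isCircuit'_subset_inter (hA : M.CyclicFlat A) (hB : M.CyclicFlat B) :
    M.CyclicFlat (⋃₀ {C | M.IsCircuit' C ∧ C ⊆ A ∩ B}) :=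
  ⟨(hA.1.inter hB.1).isFlat_sUnion_isCircuit'_subset, cyclic_sUnion_isCircuit'_subset _⟩

end Matroid

theorem cyclicFlats_form_lattice_general {α : Type*} (M : Matroid α)
    (A B : Set α) (hA : M.CyclicFlat A) (hB : M.CyclicFlat B) :
    (M.CyclicFlat (M.closure (A ∪ B)) ∧
      A ⊆ M.closure (A ∪ B) ∧ B ⊆ M.closure (A ∪ B) ∧
      ∀ Z, M.CyclicFlat Z → A ⊆ Z → B ⊆ Z → M.closure (A ∪ B) ⊆ Z) ∧
    (M.CyclicFlat (⋃₀ {C | M.IsCircuit' C ∧ C ⊆ A ∩ B}) ∧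
      ⋃₀ {C | M.IsCircuit' C ∧ C ⊆ A ∩ B} ⊆ A ∧
      ⋃₀ {C | M.IsCircuit' C ∧ C ⊆ A ∩ B} ⊆ B ∧
      ∀ Z, M.CyclicFlat Z → Z ⊆ A → Z ⊆ B → Z ⊆ ⋃₀ {C | M.IsCircuit' C ∧ C ⊆ A ∩ B}) := by
  have hAB : A ∪ B ⊆ M.closure (A ∪ B) :=
    M.subset_closure _ (union_subset hA.1.subset_ground hB.1.subset_ground)
  have hmeet : ⋃₀ {C | M.IsCircuit' C ∧ C ⊆ A ∩ B} ⊆ A ∩ B := sUnion_subset fun _ hC ↦ hC.2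
  refine ⟨⟨hA.closure_union hB, subset_union_left.trans hAB, subset_union_right.trans hAB, ?_⟩,
    ⟨hA.sUnion_isCircuit'_subset_inter hB, hmeet.trans inter_subset_left,
      hmeet.trans inter_subset_right, ?_⟩⟩
  · exact fun Z hZ hAZ hBZ ↦
      (M.closure_subset_closure (union_subset hAZ hBZ)).trans hZ.1.closure.subset
  · exact fun Z hZ hZA hZB ↦
      Matroid.Cyclic.subset_sUnion_isCircuit'_subset hZ.2 (subset_inter hZA hZB)

/-- For cyclic flats `A` and `B` of a finite matroid `M`: `cl (A ∪ B)` is a cyclic flat and is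
the least cyclic flat containing both `A` and `B`; the union of all circuits contained in
`A ∩ B` is a cyclic flat and is the greatest cyclic flat contained in both `A` and `B`.
Consequently the cyclic flats of `M`, ordered by inclusion, form a lattice. -/
theorem cyclicFlats_form_lattice {α : Type*} (M : Matroid α) [M.Finite]
    (A B : Set α) (hA : M.CyclicFlat A) (hB : M.CyclicFlat B) :
    (M.CyclicFlat (M.closure (A ∪ B)) ∧
      A ⊆ M.closure (A ∪ B) ∧ B ⊆ M.closure (A ∪ B) ∧
      ∀ Z, M.CyclicFlat Z → A ⊆ Z → B ⊆ Z → M.closure (A ∪ B) ⊆ Z) ∧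
    (M.CyclicFlat (⋃₀ {C | M.IsCircuit' C ∧ C ⊆ A ∩ B}) ∧
      ⋃₀ {C | M.IsCircuit' C ∧ C ⊆ A ∩ B} ⊆ A ∧
      ⋃₀ {C | M.IsCircuit' C ∧ C ⊆ A ∩ B} ⊆ B ∧
      ∀ Z, M.CyclicFlat Z → Z ⊆ A → Z ⊆ B → Z ⊆ ⋃₀ {C | M.IsCircuit' C ∧ C ⊆ A ∩ B}) :=
  cyclicFlats_form_lattice_general M A B hA hB
end

section
/- For every finite lattice L there exists a finite matroid M such that L is order-isomorphic to the set of cyclic flats of M ordered by inclusion. -/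
/-!
Take `|L|` copies of each element of `L`, let `f` send a copy to the element it copies, and call
`I` independent when, for every `x`, at most `r x := #{v | ¬ x ≤ v}` elements of `I` lie over
`Iic x`. The function `r` is strictly monotone and submodular with `r ⊥ = 0`, so for an
independent `I` the labels `x` where this bound is attained ("tight" labels) are closed under `⊔`.
This gives the augmentation axiom, and shows that the closure of `I` consists of `I` and the
elements lying over the greatest tight label. Strict monotonicity makes every `f ⁻¹' Iic x` a
flat, the many copies of each element provide circuits inside it, and in a cyclic flat no element
of a basis can lie outside the greatest tight label without being a coloop. Hence
`x ↦ f ⁻¹' Iic x` is an order isomorphism onto the cyclic flats.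
-/

open Set

lemma SupClosed.exists_isGreatest {L : Type*} [SemilatticeSup L] {s : Set L}
    (hs : SupClosed s) (hfin : s.Finite) (hne : s.Nonempty) : ∃ a, IsGreatest s a :=
  ⟨hfin.toFinset.sup' (by simpa) id, hs.finsetSup'_mem _ (by simp),
    fun _ hx => Finset.le_sup' id (by simpa)⟩

lemma ncard_le_ncard_of_sdiff_subset {α : Type*} [Finite α] {I J D : Set α} (hJI : J \ I ⊆ D)
    (hD : (J ∩ D).ncard ≤ (I ∩ D).ncard) : J.ncard ≤ I.ncard := by
  have hout : J \ D ⊆ I \ D := fun p hp => ⟨by_contra fun hpI => hp.2 (hJI ⟨hp.1, hpI⟩), hp.2⟩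
  rw [← ncard_inter_add_ncard_sdiff_eq_ncard J D, ← ncard_inter_add_ncard_sdiff_eq_ncard I D]
  exact add_le_add hD (ncard_le_ncard hout)

section ComplIci

variable {L : Type*} [Lattice L] [Finite L]

lemma strictMono_ncard_compl_Ici : StrictMono fun x : L => (Ici x)ᶜ.ncard :=
  fun _ _ hxy => ncard_lt_ncard (compl_lt_compl_iff_lt.2 (Ici_ssubset_Ici.2 hxy))

lemma ncard_compl_Ici_sup_add_ncard_compl_Ici_inf_le (x y : L) :
    (Ici (x ⊔ y))ᶜ.ncard + (Ici (x ⊓ y))ᶜ.ncard ≤ (Ici x)ᶜ.ncard + (Ici y)ᶜ.ncard := by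
  have hinf : (Ici (x ⊓ y))ᶜ ⊆ (Ici x)ᶜ ∩ (Ici y)ᶜ := by
    rw [← compl_union, compl_subset_compl]
    exact union_subset (Ici_subset_Ici.2 inf_le_left) (Ici_subset_Ici.2 inf_le_right)
  rw [← Ici_inter_Ici, compl_inter]
  have := ncard_union_add_ncard_inter (Ici x)ᶜ (Ici y)ᶜ
  have := ncard_le_ncard hinf
  omega

lemma ncard_compl_Ici_lt_card (x : L) : (Ici x)ᶜ.ncard < Nat.card L := by
  have := ncard_add_ncard_compl (Ici x)
  have := (ncard_pos (s := Ici x)).2 nonempty_Ici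
  omega

end ComplIci

lemma ncard_preimage_fst_singleton {A B : Type*} [Finite B] (a : A) :
    (Prod.fst ⁻¹' {a} : Set (A × B)).ncard = Nat.card B := by
  have : (Prod.fst ⁻¹' {a} : Set (A × B)) = range (Prod.mk a) := by ext ⟨x, y⟩; simp [eq_comm]
  rw [this, ncard_range_of_injective (Prod.mk_right_injective a)]

namespace Matroid

section CyclicFlat

variable {α : Type*} {M : Matroid α} {C X : Set α} {e : α}

lemma IsCircuit'.mem_closure_sdiff_singleton (hC : M.IsCircuit' C) (he : e ∈ C) :
    e ∈ M.closure (C \ {e}) := by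
  have hind : M.Indep (C \ {e}) := hC.2 _ (sdiff_singleton_ssubset.2 he)
  rw [hind.mem_closure_iff_of_notMem (notMem_sdiff_of_mem rfl), insert_sdiff_singleton,
    insert_eq_of_mem he]
  exact hC.1

lemma CyclicFlat.mem_closure_sdiff_singleton (hX : M.CyclicFlat X) (he : e ∈ X) :
    e ∈ M.closure (X \ {e}) := by
  obtain ⟨C, hC, hCX, heC⟩ := hX.2 e he
  exact M.closure_subset_closure (sdiff_subset_sdiff_left hCX)
    (hC.mem_closure_sdiff_singleton heC)

end CyclicFlat

variable {L α : Type*} [Lattice L] {r : L → ℕ} {f : α → L} {I J : Set α} {e : α} {x y : L}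

def LabelIndep (r : L → ℕ) (f : α → L) (I : Set α) : Prop :=
  ∀ x, (I ∩ f ⁻¹' Iic x).ncard ≤ r x

def LabelTight (r : L → ℕ) (f : α → L) (I : Set α) (x : L) : Prop :=
  (I ∩ f ⁻¹' Iic x).ncard = r x

lemma labelIndep_empty : LabelIndep r f ∅ := by
  simp [LabelIndep]

lemma LabelIndep.subset [Finite α] (hJ : LabelIndep r f J) (hIJ : I ⊆ J) : LabelIndep r f I :=
  fun x => (ncard_le_ncard (inter_subset_inter_left _ hIJ)).trans (hJ x)

lemma LabelIndep.labelTight_sup [Finite α] (hr : ∀ x y, r (x ⊔ y) + r (x ⊓ y) ≤ r x + r y)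
    (hI : LabelIndep r f I) (hx : LabelTight r f I x) (hy : LabelTight r f I y) :
    LabelTight r f I (x ⊔ y) := by
  have hunion : (I ∩ f ⁻¹' Iic x) ∪ (I ∩ f ⁻¹' Iic y) ⊆ I ∩ f ⁻¹' Iic (x ⊔ y) :=
    union_subset (inter_subset_inter_right _ (preimage_mono (Iic_subset_Iic.2 le_sup_left)))
      (inter_subset_inter_right _ (preimage_mono (Iic_subset_Iic.2 le_sup_right)))
  have hinter : (I ∩ f ⁻¹' Iic x) ∩ (I ∩ f ⁻¹' Iic y) = I ∩ f ⁻¹' Iic (x ⊓ y) := by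
    rw [inter_inter_inter_comm, inter_self, ← preimage_inter, Iic_inter_Iic]
  have hcount := ncard_union_add_ncard_inter (I ∩ f ⁻¹' Iic x) (I ∩ f ⁻¹' Iic y)
  rw [hinter, hx, hy] at hcount
  have := ncard_le_ncard hunion
  have := hI (x ⊓ y)
  have := hI (x ⊔ y)
  have := hr x y
  unfold LabelTight
  omega

lemma LabelIndep.exists_isGreatest_labelTight [Finite α] [Finite L]
    (hr : ∀ x y, r (x ⊔ y) + r (x ⊓ y) ≤ r x + r y) (hI : LabelIndep r f I)
    (hne : ∃ x, LabelTight r f I x) : ∃ τ, IsGreatest {x | LabelTight r f I x} τ :=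
  SupClosed.exists_isGreatest (fun _ hx _ hy => hI.labelTight_sup hr hx hy) (toFinite _) hne

lemma LabelIndep.exists_labelTight_of_not_insert [Finite α] (hI : LabelIndep r f I)
    (he : ¬ LabelIndep r f (insert e I)) : ∃ x, LabelTight r f I x ∧ f e ≤ x := by
  obtain ⟨x, hx⟩ := not_forall.1 he
  have hex : f e ≤ x := by
    by_contra hex
    rw [insert_inter_of_notMem (show e ∉ f ⁻¹' Iic x from hex)] at hx
    exact hx (hI x)
  rw [insert_inter_of_mem (show e ∈ f ⁻¹' Iic x from hex)] at hx
  have := ncard_insert_le e (I ∩ f ⁻¹' Iic x)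
  have := hI x
  exact ⟨x, by unfold LabelTight; omega, hex⟩

lemma LabelIndep.exists_insert_of_ncard_lt [Finite α] [Finite L]
    (hr : ∀ x y, r (x ⊔ y) + r (x ⊓ y) ≤ r x + r y) (hI : LabelIndep r f I)
    (hJ : LabelIndep r f J) (hlt : I.ncard < J.ncard) :
    ∃ e ∈ J, e ∉ I ∧ LabelIndep r f (insert e I) := by
  by_contra! hblocked
  have htight : ∀ e ∈ J \ I, ∃ x, LabelTight r f I x ∧ f e ≤ x := fun e he =>
    hI.exists_labelTight_of_not_insert (hblocked e he.1 he.2)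
  obtain ⟨e₀, he₀⟩ := sdiff_nonempty_of_ncard_lt_ncard hlt
  obtain ⟨τ, hτ, hτmax⟩ :=
    hI.exists_isGreatest_labelTight hr ((htight e₀ he₀).imp fun _ h => h.1)
  have hJI : J \ I ⊆ f ⁻¹' Iic τ := fun e he => by
    obtain ⟨x, hx, hex⟩ := htight e he
    exact hex.trans (hτmax hx)
  have hle : J.ncard ≤ I.ncard :=
    ncard_le_ncard_of_sdiff_subset hJI ((hJ τ).trans_eq (hτ : LabelTight r f I τ).symm)
  omega

lemma labelIndep_of_subset_preimage_singleton [Finite α] (hmono : Monotone r) {S : Set α}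
    {v : L} (hS : S ⊆ f ⁻¹' {v}) (hcard : S.ncard ≤ r v) : LabelIndep r f S := by
  intro y
  by_cases hvy : v ≤ y
  · exact (ncard_le_ncard inter_subset_left).trans (hcard.trans (hmono hvy))
  · have hempty : S ∩ f ⁻¹' Iic y = ∅ :=
      eq_empty_of_forall_notMem fun p hp => hvy ((hS hp.1 : f p = v) ▸ hp.2)
    simp [hempty]

def labelMatroid [Finite α] [Finite L] (r : L → ℕ) (f : α → L)
    (hr : ∀ x y, r (x ⊔ y) + r (x ⊓ y) ≤ r x + r y) : Matroid α :=
  (IndepMatroid.ofFinite finite_univ (LabelIndep r f) labelIndep_empty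
    (fun _ _ hJ hIJ => hJ.subset hIJ)
    (fun _ _ hI hJ hlt => hI.exists_insert_of_ncard_lt hr hJ hlt)
    (fun I _ => subset_univ I)).matroid

section labelMatroid

variable [Finite α] [Finite L] {hr : ∀ x y, r (x ⊔ y) + r (x ⊓ y) ≤ r x + r y}

@[simp] lemma labelMatroid_indep_iff : (labelMatroid r f hr).Indep I ↔ LabelIndep r f I := by
  simp [labelMatroid]

@[simp] lemma labelMatroid_ground : (labelMatroid r f hr).E = univ := rfl

instance : (labelMatroid r f hr).Finite := ⟨toFinite _⟩

lemma labelMatroid_dep_iff : (labelMatroid r f hr).Dep I ↔ ¬ LabelIndep r f I := by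
  simp [dep_iff]

lemma LabelTight.preimage_Iic_subset_closure (hI : LabelIndep r f I) (hx : LabelTight r f I x) :
    f ⁻¹' Iic x ⊆ (labelMatroid r f hr).closure I := by
  intro p hp
  rw [(labelMatroid_indep_iff.2 hI).mem_closure_iff, labelMatroid_dep_iff]
  by_cases hpI : p ∈ I
  · exact Or.inr hpI
  refine Or.inl fun hins => ?_
  have := hins x
  rw [insert_inter_of_mem hp, ncard_insert_of_notMem (fun h => hpI h.1), hx] at this
  omega

lemma LabelIndep.exists_labelTight_of_mem_closure (hI : LabelIndep r f I)
    (he : e ∈ (labelMatroid r f hr).closure I) (heI : e ∉ I) :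
    ∃ x, LabelTight r f I x ∧ f e ≤ x := by
  rw [(labelMatroid_indep_iff.2 hI).mem_closure_iff_of_notMem heI, labelMatroid_dep_iff] at he
  exact hI.exists_labelTight_of_not_insert he

lemma labelMatroid_isFlat_preimage_Iic (hmono : StrictMono r) (x : L) :
    (labelMatroid r f hr).IsFlat (f ⁻¹' Iic x) := by
  obtain ⟨I, hI⟩ := (labelMatroid r f hr).exists_isBasis (f ⁻¹' Iic x)
  rw [isFlat_iff_closure_eq, ← hI.closure_eq_closure]
  refine subset_antisymm (fun e he => ?_) hI.subset_closure
  by_contra hex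
  obtain ⟨y, hy, hey⟩ := (labelMatroid_indep_iff.1 hI.indep).exists_labelTight_of_mem_closure he
    (fun h => hex (hI.subset h))
  have hIy : I ∩ f ⁻¹' Iic y = I ∩ f ⁻¹' Iic (x ⊓ y) := by
    rw [← Iic_inter_Iic, preimage_inter, ← inter_assoc, inter_eq_left.2 hI.subset]
  have hlt : r (x ⊓ y) < r y := hmono (inf_lt_right.2 fun hyx => hex (hey.trans hyx))
  have := (labelMatroid_indep_iff.1 hI.indep) (x ⊓ y)
  rw [← hIy] at this
  unfold LabelTight at hy
  omega

lemma labelMatroid_exists_isCircuit' (hmono : Monotone r)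
    (hfib : r (f e) < (f ⁻¹' {f e}).ncard) :
    ∃ C, (labelMatroid r f hr).IsCircuit' C ∧ e ∈ C ∧ C ⊆ f ⁻¹' {f e} := by
  have hcard : r (f e) ≤ (f ⁻¹' {f e} \ {e}).ncard := by
    rw [ncard_sdiff_singleton_of_mem (show e ∈ f ⁻¹' {f e} from rfl)]
    omega
  obtain ⟨T, hT, hTcard⟩ := exists_subset_card_eq hcard
  have heT : e ∉ T := fun h => (hT h).2 rfl
  have hC : insert e T ⊆ f ⁻¹' {f e} := insert_subset rfl (hT.trans sdiff_subset)
  have hCcard : (insert e T).ncard = r (f e) + 1 := by rw [ncard_insert_of_notMem heT, hTcard]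
  refine ⟨insert e T, ⟨labelMatroid_dep_iff.2 fun hind => ?_, fun D hD => ?_⟩,
    mem_insert e T, hC⟩
  · have := hind (f e)
    rw [inter_eq_left.2 (hC.trans (preimage_mono (singleton_subset_iff.2 self_mem_Iic))),
      hCcard] at this
    omega
  · have := ncard_lt_ncard hD
    exact labelMatroid_indep_iff.2
      (labelIndep_of_subset_preimage_singleton hmono (hD.subset.trans hC) (by omega))

lemma labelMatroid_cyclicFlat_preimage_Iic (hmono : StrictMono r)
    (hfib : ∀ v, r v < (f ⁻¹' {v}).ncard) (x : L) :
    (labelMatroid r f hr).CyclicFlat (f ⁻¹' Iic x) := by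
  refine ⟨labelMatroid_isFlat_preimage_Iic hmono x, fun e he => ?_⟩
  obtain ⟨C, hC, heC, hCe⟩ := labelMatroid_exists_isCircuit' hmono.monotone (hfib (f e))
  exact ⟨C, hC, hCe.trans (preimage_mono (singleton_subset_iff.2 he)), heC⟩

/-- With `τ` the greatest tight label of a basis `I` of `X`, the flat `X` is
`I ∪ f ⁻¹' Iic τ`; an element of `I` outside `f ⁻¹' Iic τ` would be a coloop of `X`. -/
lemma labelMatroid_exists_eq_preimage_Iic_of_cyclicFlat [OrderBot L] (hbot : r ⊥ = 0)
    {X : Set α} (hX : (labelMatroid r f hr).CyclicFlat X) : ∃ x, X = f ⁻¹' Iic x := by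
  obtain ⟨I, hI⟩ := (labelMatroid r f hr).exists_isBasis X
  have hIi : LabelIndep r f I := labelMatroid_indep_iff.1 hI.indep
  have hcl : (labelMatroid r f hr).closure I = X := hI.closure_eq_closure.trans hX.1.closure
  have hbot_tight : LabelTight r f I ⊥ := le_antisymm (hbot ▸ hIi ⊥) (hbot ▸ Nat.zero_le _)
  obtain ⟨τ, hτ, hτmax⟩ := hIi.exists_isGreatest_labelTight hr ⟨⊥, hbot_tight⟩
  have hXI : X \ I ⊆ f ⁻¹' Iic τ := fun e he => by
    obtain ⟨x, hx, hex⟩ := hIi.exists_labelTight_of_mem_closure (hcl ▸ he.1) he.2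
    exact hex.trans (hτmax hx)
  refine ⟨τ, subset_antisymm (fun e heX => ?_)
    (hcl ▸ LabelTight.preimage_Iic_subset_closure hIi hτ)⟩
  by_contra heτ
  have heI : e ∈ I := by_contra fun h => heτ (hXI ⟨heX, h⟩)
  have hJ : LabelIndep r f (I \ {e}) := hIi.subset sdiff_subset
  have hτJ : LabelTight r f (I \ {e}) τ := by
    rwa [LabelTight, sdiff_inter_right_comm, sdiff_singleton_eq_self fun h => heτ h.2]
  have hXe : X \ {e} ⊆ (labelMatroid r f hr).closure (I \ {e}) := fun p hp => by
    by_cases hpI : p ∈ I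
    · exact (labelMatroid r f hr).mem_closure_of_mem ⟨hpI, hp.2⟩
    · exact hτJ.preimage_Iic_subset_closure hJ (hXI ⟨hp.1, hpI⟩)
  have heJ := closure_subset_closure_of_subset_closure hXe (hX.mem_closure_sdiff_singleton heX)
  rw [(labelMatroid_indep_iff.2 hJ).mem_closure_iff_of_notMem (notMem_sdiff_of_mem rfl),
    insert_sdiff_singleton, insert_eq_of_mem heI] at heJ
  exact heJ.not_indep hI.indep

noncomputable def labelMatroidCyclicFlatOrderIso [OrderBot L] (hmono : StrictMono r)
    (hbot : r ⊥ = 0) (hfib : ∀ v, r v < (f ⁻¹' {v}).ncard) :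
    L ≃o {X : Set α // (labelMatroid r f hr).CyclicFlat X} :=
  have hf : Function.Surjective f := fun v => nonempty_of_ncard_ne_zero (hfib v).ne_bot
  OrderIso.ofSurjective
    (OrderEmbedding.ofMapLEIff
      (fun x => ⟨f ⁻¹' Iic x, labelMatroid_cyclicFlat_preimage_Iic hmono hfib x⟩)
      fun _ _ => hf.preimage_subset_preimage_iff.trans Iic_subset_Iic)
    fun X => (labelMatroid_exists_eq_preimage_Iic_of_cyclicFlat hbot X.2).imp
      fun _ hx => Subtype.ext hx.symm

end labelMatroid

end Matroid

/-- Every finite lattice is order-isomorphic to the lattice of cyclic flats of a finite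
matroid, ordered by inclusion. -/
theorem exists_matroid_cyclicFlats_orderIso (L : Type*) [Lattice L] [Fintype L] [Nonempty L] :
    ∃ (α : Type) (M : Matroid α), M.Finite ∧
      Nonempty (L ≃o {X : Set α // M.CyclicFlat X}) := by
  let := Fintype.toBoundedOrder L
  let e := Fintype.equivFin L
  let f : Fin (Fintype.card L) × Fin (Fintype.card L) → L := e.symm ∘ Prod.fst
  have hfib : ∀ v, (Ici v)ᶜ.ncard < (f ⁻¹' {v}).ncard := fun v => by
    rw [preimage_comp, ← e.image_eq_preimage_symm, image_singleton, ncard_preimage_fst_singleton,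
      Nat.card_eq_fintype_card, Fintype.card_fin, ← Nat.card_eq_fintype_card]
    exact ncard_compl_Ici_lt_card v
  exact ⟨_, Matroid.labelMatroid _ f ncard_compl_Ici_sup_add_ncard_compl_Ici_inf_le,
    inferInstance,
    ⟨Matroid.labelMatroidCyclicFlatOrderIso strictMono_ncard_compl_Ici (by simp) hfib⟩⟩
end
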